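/- Let G = G_l ⊗ G_r be a true twin composition, and assume D_k(H) ≠ ∅ for each H ∈ {G, G_l, G_r} and each 0 ≤ k ≤ |TS(H)|. Then β(G) = β(G_l) + β(G_r). -/

import Mathlib

/-!
An admissible set `S` of `G = Gl ⊗ Gr` splits into `S ∩ V(Gl)` and `S ∩ V(Gr)`. Every matched
pair of `S − X` that crosses between the two sides is an edge between twin sets, so its ends can be
moved into the unmatched parts; the two halves are then admissible in `Gl` and `Gr` for indices
`al, ar` with `al + ar ≥ k`. Conversely, the union of admissible sets of `Gl` and `Gr` is admissible
in `G`. Hence `γ_{al+ar}(G) ≤ γ_al(Gl) + γ_ar(Gr)`, while every `γ_k(G)` is at least such a sum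
with `al + ar ≥ k`. This makes `min` additive, and then the largest index attaining it is additive.
-/

/-- A finite simple graph on a subset of an ambient vertex type `α`,
together with a designated twin set `TS ⊆ verts`. -/
structure TSGraph (α : Type*) where
  verts : Finset α
  Adj : α → α → Prop
  symm : ∀ u v, Adj u v → Adj v u
  irrefl : ∀ u, ¬ Adj u u
  adj_mem : ∀ u v, Adj u v → u ∈ verts ∧ v ∈ verts
  TS : Finset α
  TS_sub : TS ⊆ verts

namespace TSGraph

variable {α : Type*} [DecidableEq α]

/-- `f` encodes a perfect matching of the subgraph of `G` induced by `S`: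
every vertex of `S` is paired with an adjacent vertex of `S`, involutively. -/
def IsPM (G : TSGraph α) (S : Finset α) (f : α → α) : Prop :=
  ∀ v ∈ S, f v ∈ S ∧ G.Adj v (f v) ∧ f (f v) = v

/-- `S ⊆ V(G)` dominates `V(G) − TS(G)` and, for some `X ⊆ S ∩ TS(G)` of size `k`,
the subgraph induced by `S − X` has a perfect matching. -/
def Adm (G : TSGraph α) (k : ℕ) (S : Finset α) : Prop :=
  S ⊆ G.verts ∧
  (∀ v ∈ G.verts, v ∉ G.TS → v ∈ S ∨ ∃ u ∈ S, G.Adj u v) ∧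
  ∃ X ⊆ S ∩ G.TS, X.card = k ∧ ∃ f, G.IsPM (S \ X) f

/-- Membership in the family `D_k(G)`: admissible of minimum cardinality. -/
def memD (G : TSGraph α) (k : ℕ) (S : Finset α) : Prop :=
  G.Adm k S ∧ ∀ S', G.Adm k S' → S.card ≤ S'.card

/-- `D_k(G) ≠ ∅`. -/
def DkNonempty (G : TSGraph α) (k : ℕ) : Prop := ∃ S, G.memD k S

/-- `D_k(G) ≠ ∅` for all `0 ≤ k ≤ |TS(G)|`. -/
def AllDkNonempty (G : TSGraph α) : Prop := ∀ k ≤ G.TS.card, G.DkNonempty k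

/-- `γ_k(G)`: the common cardinality of the members of `D_k(G)`. -/
noncomputable def gamma (G : TSGraph α) (k : ℕ) : ℕ :=
  sInf {n | ∃ S, G.Adm k S ∧ S.card = n}

/-- A paired-dominating set of `G`. -/
def IsPDS (G : TSGraph α) (D : Finset α) : Prop :=
  D ⊆ G.verts ∧
  (∀ v ∈ G.verts, v ∈ D ∨ ∃ u ∈ D, G.Adj u v) ∧
  ∃ f, G.IsPM D f

/-- `γ_p(G)`: the paired-domination number. -/
noncomputable def gammaP (G : TSGraph α) : ℕ :=
  sInf {n | ∃ D, G.IsPDS D ∧ D.card = n}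

/-- Membership in `D_p(G)`: minimum-cardinality paired-dominating sets. -/
def memDp (G : TSGraph α) (D : Finset α) : Prop :=
  G.IsPDS D ∧ D.card = G.gammaP

/-- `min(G) = min { γ_k(G) : 0 ≤ k ≤ |TS(G)| }`. -/
noncomputable def minVal (G : TSGraph α) : ℕ :=
  sInf {n | ∃ k ≤ G.TS.card, G.gamma k = n}

/-- `α(G)`: the smallest `k` with `γ_k(G) = min(G)`. -/
noncomputable def alphaVal (G : TSGraph α) : ℕ :=
  sInf {k | k ≤ G.TS.card ∧ G.gamma k = G.minVal}

/-- `β(G)`: the largest `k` with `γ_k(G) = min(G)`. -/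
noncomputable def betaVal (G : TSGraph α) : ℕ :=
  sSup {k | k ≤ G.TS.card ∧ G.gamma k = G.minVal}

/-- Membership in `Ψ(G)`: sets in some `D_k(G)` of cardinality `min(G)`. -/
def memPsi (G : TSGraph α) (D : Finset α) : Prop :=
  (∃ k, k ≤ G.TS.card ∧ G.memD k D) ∧ D.card = G.minVal

/-- Equation (2) holds for `G`. -/
def Eq2Holds (G : TSGraph α) : Prop :=
  ∀ k ≤ G.TS.card,
    (k ≤ G.alphaVal → G.gamma k = G.minVal + G.alphaVal - k) ∧
    (G.betaVal ≤ k → G.gamma k = G.minVal + k - G.betaVal) ∧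
    (G.alphaVal < k → k < G.betaVal → Even (k - G.alphaVal) → G.gamma k = G.minVal) ∧
    (G.alphaVal < k → k < G.betaVal → ¬ Even (k - G.alphaVal) → G.gamma k = G.minVal + 1)

/-- `G = Gl ⊗ Gr` (true twin composition). -/
def IsTrueTwin (G Gl Gr : TSGraph α) : Prop :=
  Disjoint Gl.verts Gr.verts ∧
  G.verts = Gl.verts ∪ Gr.verts ∧
  (∀ u v, G.Adj u v ↔ Gl.Adj u v ∨ Gr.Adj u v ∨
    (u ∈ Gl.TS ∧ v ∈ Gr.TS) ∨ (u ∈ Gr.TS ∧ v ∈ Gl.TS)) ∧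
  G.TS = Gl.TS ∪ Gr.TS

/-- `G = Gl ⊙ Gr` (false twin composition). -/
def IsFalseTwin (G Gl Gr : TSGraph α) : Prop :=
  Disjoint Gl.verts Gr.verts ∧
  G.verts = Gl.verts ∪ Gr.verts ∧
  (∀ u v, G.Adj u v ↔ Gl.Adj u v ∨ Gr.Adj u v) ∧
  G.TS = Gl.TS ∪ Gr.TS

/-- `G = Gl ⊕ Gr` (attachment composition). -/
def IsAttach (G Gl Gr : TSGraph α) : Prop :=
  Disjoint Gl.verts Gr.verts ∧
  G.verts = Gl.verts ∪ Gr.verts ∧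
  (∀ u v, G.Adj u v ↔ Gl.Adj u v ∨ Gr.Adj u v ∨
    (u ∈ Gl.TS ∧ v ∈ Gr.TS) ∨ (u ∈ Gr.TS ∧ v ∈ Gl.TS)) ∧
  G.TS = Gl.TS

/-- The twin-set graph `G` arises from a decomposition tree all of whose associated
twin-set graphs satisfy the property `P`. -/
inductive FromDecompTree (P : TSGraph α → Prop) : TSGraph α → Prop where
  | single (G : TSGraph α) (v : α) (hv : G.verts = {v}) (hts : G.TS = {v})
      (hadj : ∀ u w, ¬ G.Adj u w) (hP : P G) : FromDecompTree P G
  | ttwin (G Gl Gr : TSGraph α) (hl : FromDecompTree P Gl) (hr : FromDecompTree P Gr)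
      (h : IsTrueTwin G Gl Gr) (hP : P G) : FromDecompTree P G
  | ftwin (G Gl Gr : TSGraph α) (hl : FromDecompTree P Gl) (hr : FromDecompTree P Gr)
      (h : IsFalseTwin G Gl Gr) (hP : P G) : FromDecompTree P G
  | attach (G Gl Gr : TSGraph α) (hl : FromDecompTree P Gl) (hr : FromDecompTree P Gr)
      (h : IsAttach G Gl Gr) (hP : P G) : FromDecompTree P G

end TSGraph

namespace TSGraph

variable {α : Type*} [DecidableEq α]

lemma Adm.le_card_TS {G : TSGraph α} {k : ℕ} {S : Finset α} (hS : G.Adm k S) :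
    k ≤ G.TS.card := by
  obtain ⟨-, -, X, hX, rfl, -⟩ := hS
  exact Finset.card_le_card (hX.trans Finset.inter_subset_right)

lemma gamma_le_card {G : TSGraph α} {k : ℕ} {S : Finset α} (hS : G.Adm k S) :
    G.gamma k ≤ S.card :=
  Nat.sInf_le ⟨S, hS, rfl⟩

lemma AllDkNonempty.exists_adm_card_eq_gamma {G : TSGraph α} (hG : G.AllDkNonempty) {k : ℕ}
    (hk : k ≤ G.TS.card) : ∃ S, G.Adm k S ∧ S.card = G.gamma k := by
  obtain ⟨S, hS, -⟩ := hG k hk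
  exact Nat.sInf_mem (s := {n | ∃ S, G.Adm k S ∧ S.card = n}) ⟨S.card, S, hS, rfl⟩

lemma minVal_le_gamma (G : TSGraph α) {k : ℕ} (hk : k ≤ G.TS.card) : G.minVal ≤ G.gamma k :=
  Nat.sInf_le ⟨k, hk, rfl⟩

lemma exists_gamma_eq_minVal (G : TSGraph α) : ∃ k ≤ G.TS.card, G.gamma k = G.minVal :=
  Nat.sInf_mem (s := {n | ∃ k ≤ G.TS.card, G.gamma k = n}) ⟨G.gamma 0, 0, Nat.zero_le _, rfl⟩

lemma betaVal_le_card_TS_and_gamma_eq (G : TSGraph α) :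
    G.betaVal ≤ G.TS.card ∧ G.gamma G.betaVal = G.minVal :=
  Nat.sSup_mem (s := {k | k ≤ G.TS.card ∧ G.gamma k = G.minVal}) (exists_gamma_eq_minVal G)
    ⟨G.TS.card, fun _ hk => hk.1⟩

lemma le_betaVal {G : TSGraph α} {k : ℕ} (hk : k ≤ G.TS.card) (hγ : G.gamma k = G.minVal) :
    k ≤ G.betaVal :=
  le_csSup ⟨G.TS.card, fun _ hk => hk.1⟩ ⟨hk, hγ⟩

namespace IsTrueTwin

variable {G Gl Gr : TSGraph α}

lemma swap (h : IsTrueTwin G Gl Gr) : IsTrueTwin G Gr Gl := by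
  obtain ⟨hd, hv, ha, ht⟩ := h
  refine ⟨hd.symm, by rw [hv, Finset.union_comm], fun u v => ?_, by rw [ht, Finset.union_comm]⟩
  rw [ha u v]
  tauto

lemma card_TS (h : IsTrueTwin G Gl Gr) : G.TS.card = Gl.TS.card + Gr.TS.card := by
  rw [h.2.2.2, Finset.card_union_of_disjoint (h.1.mono Gl.TS_sub Gr.TS_sub)]

lemma card_inter_add_card_inter (h : IsTrueTwin G Gl Gr) {S : Finset α} (hS : S ⊆ G.verts) :
    (S ∩ Gl.verts).card + (S ∩ Gr.verts).card = S.card := by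
  rw [← Finset.card_union_of_disjoint (h.1.mono Finset.inter_subset_right
      Finset.inter_subset_right), ← Finset.inter_union_distrib_left,
    Finset.inter_eq_left.mpr (h.2.1 ▸ hS)]

lemma adj_of_adj_left (h : IsTrueTwin G Gl Gr) {u v : α} (huv : Gl.Adj u v) : G.Adj u v :=
  (h.2.2.1 u v).mpr (Or.inl huv)

lemma mem_TS_left (h : IsTrueTwin G Gl Gr) {v : α} (hv : v ∈ G.TS) (hvl : v ∈ Gl.verts) :
    v ∈ Gl.TS := by
  rw [h.2.2.2, Finset.mem_union] at hv
  exact hv.resolve_right fun hr => Finset.disjoint_left.mp h.1 hvl (Gr.TS_sub hr)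

lemma adj_left_or_cross (h : IsTrueTwin G Gl Gr) {v w : α} (hv : v ∈ Gl.verts)
    (hvw : G.Adj v w) : Gl.Adj v w ∨ v ∈ Gl.TS ∧ w ∈ Gr.TS := by
  have hvr : v ∉ Gr.verts := Finset.disjoint_left.mp h.1 hv
  rcases (h.2.2.1 v w).mp hvw with hl | hr | hlr | hrl
  · exact Or.inl hl
  · exact absurd (Gr.adj_mem _ _ hr).1 hvr
  · exact Or.inr hlr
  · exact absurd (Gr.TS_sub hrl.1) hvr

lemma isPM_union (h : IsTrueTwin G Gl Gr) {Tl Tr : Finset α} {fl fr : α → α}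
    (hl : Gl.IsPM Tl fl) (hr : Gr.IsPM Tr fr) (hTl : Tl ⊆ Gl.verts) (hTr : Tr ⊆ Gr.verts) :
    G.IsPM (Tl ∪ Tr) (fun v => if v ∈ Gl.verts then fl v else fr v) := by
  intro v hv
  rcases Finset.mem_union.mp hv with hv | hv
  · obtain ⟨hfv, hadj, hff⟩ := hl v hv
    simp only [if_pos (hTl hv), if_pos (hTl hfv), hff, and_true]
    exact ⟨Finset.mem_union_left _ hfv, h.adj_of_adj_left hadj⟩
  · obtain ⟨hfv, hadj, hff⟩ := hr v hv
    have hnl : ∀ {w}, w ∈ Tr → w ∉ Gl.verts := fun hw => Finset.disjoint_right.mp h.1 (hTr hw)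
    simp only [if_neg (hnl hv), if_neg (hnl hfv), hff, and_true]
    exact ⟨Finset.mem_union_right _ hfv, h.swap.adj_of_adj_left hadj⟩

lemma adm_union (h : IsTrueTwin G Gl Gr) {al ar : ℕ} {Sl Sr : Finset α}
    (hl : Gl.Adm al Sl) (hr : Gr.Adm ar Sr) : G.Adm (al + ar) (Sl ∪ Sr) := by
  obtain ⟨hSl, hdl, Xl, hXl, rfl, fl, hfl⟩ := hl
  obtain ⟨hSr, hdr, Xr, hXr, rfl, fr, hfr⟩ := hr
  have hXlv : Xl ⊆ Gl.verts := hXl.trans (Finset.inter_subset_left.trans hSl)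
  have hXrv : Xr ⊆ Gr.verts := hXr.trans (Finset.inter_subset_left.trans hSr)
  have hdiff : (Sl ∪ Sr) \ (Xl ∪ Xr) = Sl \ Xl ∪ Sr \ Xr := by
    rw [Finset.union_sdiff_distrib, Finset.sdiff_union_distrib, Finset.sdiff_union_distrib,
      (Finset.disjoint_of_subset_left hSl (h.1.mono_right hXrv)).sdiff_eq_left,
      (Finset.disjoint_of_subset_left hSr (h.1.symm.mono_right hXlv)).sdiff_eq_left,
      Finset.inter_eq_left.mpr Finset.sdiff_subset, Finset.inter_eq_right.mpr Finset.sdiff_subset]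
  refine ⟨?_, ?_, Xl ∪ Xr, ?_, ?_, _, hdiff ▸ h.isPM_union hfl hfr
    (Finset.sdiff_subset.trans hSl) (Finset.sdiff_subset.trans hSr)⟩
  · exact h.2.1 ▸ Finset.union_subset_union hSl hSr
  · intro v hv hvTS
    rw [h.2.2.2] at hvTS
    rcases Finset.mem_union.mp (h.2.1 ▸ hv) with hv | hv
    · rcases hdl v hv fun hT => hvTS (Finset.mem_union_left _ hT) with hS | ⟨u, hu, huv⟩
      · exact Or.inl (Finset.mem_union_left _ hS)
      · exact Or.inr ⟨u, Finset.mem_union_left _ hu, h.adj_of_adj_left huv⟩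
    · rcases hdr v hv fun hT => hvTS (Finset.mem_union_right _ hT) with hS | ⟨u, hu, huv⟩
      · exact Or.inl (Finset.mem_union_right _ hS)
      · exact Or.inr ⟨u, Finset.mem_union_right _ hu, h.swap.adj_of_adj_left huv⟩
  · rw [h.2.2.2]
    exact Finset.union_subset (hXl.trans (Finset.inter_subset_inter Finset.subset_union_left
      Finset.subset_union_left)) (hXr.trans (Finset.inter_subset_inter Finset.subset_union_right
      Finset.subset_union_right))
  · exact Finset.card_union_of_disjoint (h.1.mono hXlv hXrv)

lemma exists_adm_inter_left (h : IsTrueTwin G Gl Gr) {S X : Finset α} {f : α → α}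
    (hdom : ∀ v ∈ G.verts, v ∉ G.TS → v ∈ S ∨ ∃ u ∈ S, G.Adj u v)
    (hX : X ⊆ S ∩ G.TS) (hf : G.IsPM (S \ X) f) :
    ∃ al, (X ∩ Gl.verts).card ≤ al ∧ Gl.Adm al (S ∩ Gl.verts) := by
  have hlr : ∀ {v}, v ∈ Gl.verts → v ∉ Gr.verts := fun hv => Finset.disjoint_left.mp h.1 hv
  set M := (S \ X).filter (fun v => v ∈ Gl.verts ∧ f v ∈ Gl.verts)
  have hMS : M ⊆ S ∩ Gl.verts := fun v hv => by
    obtain ⟨hvSX, hvl, -⟩ := Finset.mem_filter.mp hv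
    exact Finset.mem_inter.mpr ⟨(Finset.mem_sdiff.mp hvSX).1, hvl⟩
  -- the vertices of `S ∩ V(Gl)` left unmatched inside `Gl` are twins: either in `X`, or
  -- matched by `f` across to `Gr`
  have hXl : (S ∩ Gl.verts) \ M ⊆ S ∩ Gl.verts ∩ Gl.TS := by
    intro v hv
    obtain ⟨hvSl, hvM⟩ := Finset.mem_sdiff.mp hv
    obtain ⟨hvS, hvl⟩ := Finset.mem_inter.mp hvSl
    refine Finset.mem_inter.mpr ⟨hvSl, ?_⟩
    by_cases hvX : v ∈ X
    · exact h.mem_TS_left (Finset.mem_inter.mp (hX hvX)).2 hvl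
    · have hvSX : v ∈ S \ X := Finset.mem_sdiff.mpr ⟨hvS, hvX⟩
      have hfv : f v ∉ Gl.verts := fun hfv => hvM (Finset.mem_filter.mpr ⟨hvSX, hvl, hfv⟩)
      rcases h.adj_left_or_cross hvl (hf v hvSX).2.1 with hadj | hcross
      · exact absurd (Gl.adj_mem _ _ hadj).2 hfv
      · exact hcross.1
  refine ⟨((S ∩ Gl.verts) \ M).card, Finset.card_le_card fun x hx => ?_,
    Finset.inter_subset_right, fun v hvl hvTS => ?_, _, hXl, rfl, f, ?_⟩
  · obtain ⟨hxX, hxl⟩ := Finset.mem_inter.mp hx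
    refine Finset.mem_sdiff.mpr ⟨Finset.mem_inter.mpr ⟨(Finset.mem_inter.mp (hX hxX)).1, hxl⟩,
      fun hxM => ?_⟩
    exact (Finset.mem_sdiff.mp (Finset.mem_filter.mp hxM).1).2 hxX
  · have hvG : v ∈ G.verts := h.2.1 ▸ Finset.mem_union_left _ hvl
    rcases hdom v hvG fun hT => hvTS (h.mem_TS_left hT hvl) with hvS | ⟨u, hu, huv⟩
    · exact Or.inl (Finset.mem_inter.mpr ⟨hvS, hvl⟩)
    · rcases h.adj_left_or_cross hvl (G.symm _ _ huv) with hvu | hcross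
      · exact Or.inr ⟨u, Finset.mem_inter.mpr ⟨hu, (Gl.adj_mem _ _ hvu).2⟩, Gl.symm _ _ hvu⟩
      · exact absurd hcross.1 hvTS
  · rw [Finset.sdiff_sdiff_eq_self hMS]
    intro v hv
    obtain ⟨hvSX, hvl, hfvl⟩ := Finset.mem_filter.mp hv
    obtain ⟨hfvSX, hadj, hff⟩ := hf v hvSX
    refine ⟨Finset.mem_filter.mpr ⟨hfvSX, hfvl, by rwa [hff]⟩, ?_, hff⟩
    exact (h.adj_left_or_cross hvl hadj).resolve_right fun hcross => hlr hfvl (Gr.TS_sub hcross.2)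

lemma exists_adm_inter (h : IsTrueTwin G Gl Gr) {k : ℕ} {S : Finset α} (hS : G.Adm k S) :
    ∃ al ar, k ≤ al + ar ∧ Gl.Adm al (S ∩ Gl.verts) ∧ Gr.Adm ar (S ∩ Gr.verts) := by
  obtain ⟨hSG, hdom, X, hX, rfl, f, hf⟩ := hS
  obtain ⟨al, hal, hAl⟩ := h.exists_adm_inter_left hdom hX hf
  obtain ⟨ar, har, hAr⟩ := h.swap.exists_adm_inter_left hdom hX hf
  have hXG : X ⊆ G.verts := hX.trans (Finset.inter_subset_left.trans hSG)
  exact ⟨al, ar, h.card_inter_add_card_inter hXG ▸ Nat.add_le_add hal har, hAl, hAr⟩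

lemma gamma_add_le (h : IsTrueTwin G Gl Gr) (hGl : Gl.AllDkNonempty) (hGr : Gr.AllDkNonempty)
    {al ar : ℕ} (hal : al ≤ Gl.TS.card) (har : ar ≤ Gr.TS.card) :
    G.gamma (al + ar) ≤ Gl.gamma al + Gr.gamma ar := by
  obtain ⟨Sl, hSl, hSlγ⟩ := hGl.exists_adm_card_eq_gamma hal
  obtain ⟨Sr, hSr, hSrγ⟩ := hGr.exists_adm_card_eq_gamma har
  rw [← hSlγ, ← hSrγ]
  exact (gamma_le_card (h.adm_union hSl hSr)).trans (Finset.card_union_le _ _)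

lemma exists_gamma_add_le (h : IsTrueTwin G Gl Gr) (hG : G.AllDkNonempty) {k : ℕ}
    (hk : k ≤ G.TS.card) : ∃ al ar, al ≤ Gl.TS.card ∧ ar ≤ Gr.TS.card ∧ k ≤ al + ar ∧
      Gl.gamma al + Gr.gamma ar ≤ G.gamma k := by
  obtain ⟨S, hS, hSγ⟩ := hG.exists_adm_card_eq_gamma hk
  obtain ⟨al, ar, hk, hAl, hAr⟩ := h.exists_adm_inter hS
  refine ⟨al, ar, hAl.le_card_TS, hAr.le_card_TS, hk, ?_⟩
  calc Gl.gamma al + Gr.gamma ar ≤ (S ∩ Gl.verts).card + (S ∩ Gr.verts).card :=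
        Nat.add_le_add (gamma_le_card hAl) (gamma_le_card hAr)
    _ = G.gamma k := by rw [h.card_inter_add_card_inter hS.1, hSγ]

lemma minVal_eq (h : IsTrueTwin G Gl Gr) (hG : G.AllDkNonempty) (hGl : Gl.AllDkNonempty)
    (hGr : Gr.AllDkNonempty) : G.minVal = Gl.minVal + Gr.minVal := by
  apply le_antisymm
  · obtain ⟨kl, hkl, hγl⟩ := exists_gamma_eq_minVal Gl
    obtain ⟨kr, hkr, hγr⟩ := exists_gamma_eq_minVal Gr
    calc G.minVal ≤ G.gamma (kl + kr) := G.minVal_le_gamma (h.card_TS ▸ Nat.add_le_add hkl hkr)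
      _ ≤ Gl.minVal + Gr.minVal := hγl ▸ hγr ▸ h.gamma_add_le hGl hGr hkl hkr
  · obtain ⟨k, hk, hγ⟩ := exists_gamma_eq_minVal G
    obtain ⟨al, ar, hal, har, -, hle⟩ := h.exists_gamma_add_le hG hk
    calc Gl.minVal + Gr.minVal ≤ Gl.gamma al + Gr.gamma ar :=
          Nat.add_le_add (Gl.minVal_le_gamma hal) (Gr.minVal_le_gamma har)
      _ ≤ G.minVal := hγ ▸ hle

end IsTrueTwin

end TSGraph

open TSGraph in
/-- For a true twin composition `G = Gl ⊗ Gr` with all `D_k`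
families nonempty, `β(G) = β(Gl) + β(Gr)`. -/
theorem stmt9 {α : Type*} [DecidableEq α] (G Gl Gr : TSGraph α)
    (hcomp : IsTrueTwin G Gl Gr)
    (hG : G.AllDkNonempty) (hGl : Gl.AllDkNonempty) (hGr : Gr.AllDkNonempty) :
    G.betaVal = Gl.betaVal + Gr.betaVal := by
  have hmin := hcomp.minVal_eq hG hGl hGr
  obtain ⟨hβl, hγl⟩ := Gl.betaVal_le_card_TS_and_gamma_eq
  obtain ⟨hβr, hγr⟩ := Gr.betaVal_le_card_TS_and_gamma_eq
  apply le_antisymm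
  · obtain ⟨hβ, hγ⟩ := G.betaVal_le_card_TS_and_gamma_eq
    obtain ⟨al, ar, hal, har, hle, hsum⟩ := hcomp.exists_gamma_add_le hG hβ
    have hl := Gl.minVal_le_gamma hal
    have hr := Gr.minVal_le_gamma har
    have hal' := le_betaVal hal (by omega)
    have har' := le_betaVal har (by omega)
    omega
  · have hk : Gl.betaVal + Gr.betaVal ≤ G.TS.card := hcomp.card_TS ▸ Nat.add_le_add hβl hβr
    have hle := hcomp.gamma_add_le hGl hGr hβl hβr
    have hge := G.minVal_le_gamma hk
    exact le_betaVal hk (by omega)
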